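/- Suppose rounded processing times satisfy λ·s_j ≤ ŝ_j ≤ λ·s_j + 1 for all jobs j, with λ = n²·(1/ε)/s_max where s_max = max_j s_j and W = Σ_j w_j ≤ n·w_v for w_v = max_j w_j. If the optimal schedule π (for original times) schedules v weakly after u (a job with s_u = s_max), then any schedule σ that is optimal for the rounded times has original objective at most (1 + ε)·OPT, where OPT is the objective of π. -/
import Mathlib


noncomputable def compTime (n : ℕ) (τ : Equiv.Perm (Fin n)) (t : Fin n → ℝ) (j : Fin n) : ℝ :=
  ∑ i ∈ Finset.univ.filter (fun i => τ.symm i ≤ τ.symm j), t i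

noncomputable def objVal (n : ℕ) (τ : Equiv.Perm (Fin n)) (w t : Fin n → ℝ) : ℝ :=
  ∑ j : Fin n, w j * compTime n τ t j

lemma objVal_mono (n : ℕ) (τ : Equiv.Perm (Fin n)) (w t t' : Fin n → ℝ)
    (hw : ∀ j, 0 ≤ w j) (h : ∀ j, t j ≤ t' j) :
    objVal n τ w t ≤ objVal n τ w t' := by
  apply Finset.sum_le_sum
  intro j _
  apply mul_le_mul_of_nonneg_left _ (hw j)
  exact Finset.sum_le_sum fun i _ => h i

lemma objVal_smul (n : ℕ) (τ : Equiv.Perm (Fin n)) (w s : Fin n → ℝ) (c : ℝ) :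
    objVal n τ w (fun j => c * s j) = c * objVal n τ w s := by
  unfold objVal compTime
  rw [Finset.mul_sum]
  refine Finset.sum_congr rfl fun j _ => ?_
  rw [← Finset.mul_sum]
  ring

/-- If the optimal schedule `π` puts the maximum-weight job `v` weakly after the
maximum-size job `u`, then a schedule `σ` optimal for the rounded times
(with `λ = n²(1/ε)/s_max`) is a `(1+ε)`-approximation for the original times. -/
theorem rounding_success (n : ℕ) (hn : 1 ≤ n) (ε : ℝ) (hε : 0 < ε)
    (w s sr : Fin n → ℝ) (hw : ∀ j, 0 ≤ w j) (hs : ∀ j, 0 ≤ s j)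
    (u v : Fin n) (hu : ∀ j, s j ≤ s u) (hsu : 0 < s u) (hv : ∀ j, w j ≤ w v)
    (lam : ℝ) (hlam : lam = (n : ℝ) ^ 2 * (1 / ε) / s u)
    (hround : ∀ j, lam * s j ≤ sr j ∧ sr j ≤ lam * s j + 1)
    (hW : ∑ j : Fin n, w j ≤ (n : ℝ) * w v)
    (A : Set (Equiv.Perm (Fin n))) (σ π : Equiv.Perm (Fin n)) (hσA : σ ∈ A) (hπA : π ∈ A)
    (hσopt : ∀ τ ∈ A, objVal n σ w sr ≤ objVal n τ w sr)
    (hπopt : ∀ τ ∈ A, objVal n π w s ≤ objVal n τ w s)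
    (huv : π.symm u ≤ π.symm v) :
    objVal n σ w s ≤ (1 + ε) * objVal n π w s := by
  have hnpos : (0:ℝ) < n := by exact_mod_cast hn
  have hlampos : 0 < lam := by
    rw [hlam]
    positivity
  -- λ·objVal σ s ≤ objVal σ sr
  have h1 : lam * objVal n σ w s ≤ objVal n σ w sr := by
    rw [← objVal_smul]
    exact objVal_mono n σ w _ sr hw fun j => (hround j).1
  -- objVal π sr ≤ λ·objVal π s + n·W
  have h2 : objVal n π w sr ≤ lam * objVal n π w s + (n:ℝ) * ∑ j : Fin n, w j := by
    have step : objVal n π w sr ≤ objVal n π w (fun j => lam * s j + 1) :=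
      objVal_mono n π w sr _ hw fun j => (hround j).2
    refine step.trans ?_
    unfold objVal compTime
    rw [Finset.mul_sum, Finset.mul_sum, ← Finset.sum_add_distrib]
    apply Finset.sum_le_sum
    intro j _
    rw [Finset.sum_add_distrib, ← Finset.mul_sum, Finset.sum_const, nsmul_eq_mul, mul_one,
      mul_add, mul_left_comm (w j) lam]
    have hcard : ((Finset.univ.filter (fun i => π.symm i ≤ π.symm j)).card : ℝ) ≤ (n : ℝ) := by
      have := Finset.card_filter_le Finset.univ (fun i => π.symm i ≤ π.symm j)
      simpa using (Nat.cast_le.mpr this : (((Finset.univ.filter (fun i => π.symm i ≤ π.symm j)).card : ℝ)) ≤ ((Finset.univ : Finset (Fin n)).card : ℝ))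
    have h4 : w j * ((Finset.univ.filter (fun i => π.symm i ≤ π.symm j)).card : ℝ) ≤ w j * n :=
      mul_le_mul_of_nonneg_left hcard (hw j)
    nlinarith
  -- OPT ≥ w v * s u
  have hOPT : w v * s u ≤ objVal n π w s := by
    have hcomp : s u ≤ compTime n π s v := by
      unfold compTime
      have hmem : u ∈ Finset.univ.filter (fun i => π.symm i ≤ π.symm v) := by
        simp [huv]
      exact Finset.single_le_sum (f := s) (fun i _ => hs i) hmem
    calc w v * s u ≤ w v * compTime n π s v := by
          apply mul_le_mul_of_nonneg_left hcomp ((hw v).trans (hv v))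
      _ ≤ objVal n π w s := by
          apply Finset.single_le_sum (f := fun j => w j * compTime n π s j) _ (Finset.mem_univ v)
          intro i _
          apply mul_nonneg (hw i)
          exact Finset.sum_nonneg fun i _ => hs i
  -- n·W ≤ λ·ε·OPT
  have h3 : (n:ℝ) * ∑ j : Fin n, w j ≤ lam * ε * objVal n π w s := by
    have hn2 : (n:ℝ)^2 = lam * ε * s u := by
      rw [hlam]; field_simp
    calc (n:ℝ) * ∑ j : Fin n, w j ≤ (n:ℝ) * ((n:ℝ) * w v) := by
          apply mul_le_mul_of_nonneg_left hW hnpos.le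
      _ = (n:ℝ)^2 * w v := by ring
      _ = lam * ε * (w v * s u) := by rw [hn2]; ring
      _ ≤ lam * ε * objVal n π w s := by
          apply mul_le_mul_of_nonneg_left hOPT
          positivity
  have key : lam * objVal n σ w s ≤ lam * ((1 + ε) * objVal n π w s) := by
    calc lam * objVal n σ w s ≤ objVal n σ w sr := h1
      _ ≤ objVal n π w sr := hσopt π hπA
      _ ≤ lam * objVal n π w s + (n:ℝ) * ∑ j : Fin n, w j := h2
      _ ≤ lam * objVal n π w s + lam * ε * objVal n π w s := by linarith
      _ = lam * ((1 + ε) * objVal n π w s) := by ring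
  exact le_of_mul_le_mul_left key hlampos
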